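/- arXiv:2108.07412 — 6 statements merged into one kernel-verified Lean document; each statement's English description precedes it below -/
import Mathlib

section
/- The dual cone of the extended second order cone L(k,ℓ) = {(x,u) ∈ ℝ^k × ℝ^ℓ : x_i ≥ ‖u‖ for all i} is M(k,ℓ) = {(y,v) ∈ ℝ^k × ℝ^ℓ : e^⊤ y ≥ ‖v‖ and y ≥ 0}. -/
/-! The inclusion `M ⊆ L*` is Cauchy–Schwarz: `⟪u, v⟫ ≥ -‖u‖ ‖v‖ ≥ -‖u‖ ∑ yᵢ ≥ -⟪x, y⟫`.
Conversely, testing against `(eᵢ, 0) ∈ L` gives `y ≥ 0`, and testing against `(‖v‖ e, -v) ∈ L`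
gives `‖v‖ (∑ yᵢ - ‖v‖) ≥ 0`. -/

open RealInnerProductSpace

variable {ι E : Type*} [Fintype ι] [NormedAddCommGroup E] [InnerProductSpace ℝ E]

namespace EuclideanSpace

theorem mul_sum_le_inner {c : ℝ} {x y : EuclideanSpace ℝ ι} (hx : ∀ i, c ≤ x i)
    (hy : ∀ i, 0 ≤ y i) : c * ∑ i, y i ≤ ⟪x, y⟫ := by
  rw [PiLp.inner_apply, Finset.mul_sum]
  exact Finset.sum_le_sum fun i _ => by
    simpa [mul_comm] using mul_le_mul_of_nonneg_right (hx i) (hy i)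

theorem inner_const_left (c : ℝ) (y : EuclideanSpace ℝ ι) :
    ⟪WithLp.toLp 2 (fun _ => c), y⟫ = c * ∑ i, y i := by
  simp [PiLp.inner_apply, Finset.mul_sum, mul_comm]

end EuclideanSpace

open EuclideanSpace

theorem inner_add_inner_nonneg_of_norm_le_sum {x y : EuclideanSpace ℝ ι} {u v : E}
    (hx : ∀ i, ‖u‖ ≤ x i) (hv : ‖v‖ ≤ ∑ i, y i) (hy : ∀ i, 0 ≤ y i) :
    0 ≤ ⟪x, y⟫ + ⟪u, v⟫ := by
  have hxy := mul_sum_le_inner hx hy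
  have huv := neg_le_of_abs_le (abs_real_inner_le_norm u v)
  nlinarith [mul_le_mul_of_nonneg_left hv (norm_nonneg u)]

theorem norm_le_sum_and_nonneg_of_inner_add_inner_nonneg
    [DecidableEq ι] {y : EuclideanSpace ℝ ι} {v : E}
    (h : ∀ (x : EuclideanSpace ℝ ι) (u : E), (∀ i, ‖u‖ ≤ x i) → 0 ≤ ⟪x, y⟫ + ⟪u, v⟫) :
    ‖v‖ ≤ ∑ i, y i ∧ ∀ i, 0 ≤ y i := by
  have hy : ∀ i, 0 ≤ y i := fun i => by
    simpa [inner_single_left] using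
      h (single i 1) 0 fun j => by simp; positivity
  have hv : 0 ≤ ‖v‖ * (∑ i, y i - ‖v‖) := by
    have := h (WithLp.toLp 2 fun _ => ‖v‖) (-v) fun _ => by simp
    rwa [inner_const_left, inner_neg_left, real_inner_self_eq_norm_sq, ← sub_eq_add_neg,
      sq, ← mul_sub] at this
  have hsum : 0 ≤ ∑ i, y i := Finset.sum_nonneg fun i _ => hy i
  exact ⟨by nlinarith [norm_nonneg v], hy⟩

theorem stmt1_general (k l : ℕ)
    (y : EuclideanSpace ℝ (Fin k)) (v : EuclideanSpace ℝ (Fin l)) :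
    (∀ (x : EuclideanSpace ℝ (Fin k)) (u : EuclideanSpace ℝ (Fin l)),
        (∀ i, ‖u‖ ≤ x i) → 0 ≤ ⟪x, y⟫ + ⟪u, v⟫) ↔
      (‖v‖ ≤ ∑ i, y i ∧ ∀ i, 0 ≤ y i) :=
  ⟨norm_le_sum_and_nonneg_of_inner_add_inner_nonneg,
    fun ⟨hv, hy⟩ _ _ hx => inner_add_inner_nonneg_of_norm_le_sum hx hv hy⟩

theorem stmt1 (k l : ℕ) (hk : 0 < k) (hl : 0 < l)
    (y : EuclideanSpace ℝ (Fin k)) (v : EuclideanSpace ℝ (Fin l)) :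
    (∀ (x : EuclideanSpace ℝ (Fin k)) (u : EuclideanSpace ℝ (Fin l)),
        (∀ i, ‖u‖ ≤ x i) → 0 ≤ ⟪x, y⟫ + ⟪u, v⟫) ↔
      (‖v‖ ≤ ∑ i, y i ∧ ∀ i, 0 ≤ y i) :=
  stmt1_general k l y v
end

section
/- For any k ≥ 2 and ℓ ≥ 1, the extended second order cone satisfies L(k,ℓ) ⊂ M(k,ℓ) strictly; in particular L is subdual but not self-dual. -/
open RealInnerProductSpace

theorem stmt2 (k l : ℕ) (hk : 2 ≤ k) (hl : 0 < l)
    (L M : Set (EuclideanSpace ℝ (Fin k) × EuclideanSpace ℝ (Fin l)))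
    (hL : L = {p | ∀ i, ‖p.2‖ ≤ p.1 i})
    (hM : M = {p | ‖p.2‖ ≤ ∑ i, p.1 i ∧ ∀ i, 0 ≤ p.1 i}) :
    L ⊂ M := by
  subst hL hM
  constructor
  · rintro ⟨x, u⟩ h
    have hnn : ∀ i, 0 ≤ x i := fun i => (norm_nonneg u).trans (h i)
    refine ⟨?_, hnn⟩
    calc ‖u‖ ≤ x ⟨0, by omega⟩ := h _
      _ ≤ ∑ i, x i := Finset.single_le_sum (fun i _ => hnn i) (Finset.mem_univ _)
  · intro hsub
    set i0 : Fin k := ⟨0, by omega⟩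
    set i1 : Fin k := ⟨1, by omega⟩
    set x : EuclideanSpace ℝ (Fin k) := EuclideanSpace.single i0 1
    set u : EuclideanSpace ℝ (Fin l) := EuclideanSpace.single ⟨0, hl⟩ 1
    have hu : ‖u‖ = 1 := by simp [u, EuclideanSpace.norm_single]
    have hmem : (x, u) ∈ {p : EuclideanSpace ℝ (Fin k) × EuclideanSpace ℝ (Fin l) |
        ‖p.2‖ ≤ ∑ i, p.1 i ∧ ∀ i, 0 ≤ p.1 i} := by
      constructor
      · simp only [hu, x]
        rw [show ∑ i, (EuclideanSpace.single i0 (1:ℝ)) i = 1 by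
          simp [EuclideanSpace.single_apply]]
      · intro i
        simp only [x, EuclideanSpace.single_apply]
        split <;> norm_num
    have := hsub hmem
    have h1 := this i1
    rw [hu] at h1
    have : x i1 = 0 := by
      simp [x, EuclideanSpace.single_apply, i0, i1, Fin.ext_iff]
    linarith
end

section
/- Let x, y ∈ ℝ^k and u, v ∈ ℝ^ℓ \ {0}. Then ((x,u),(y,v)) lies in the complementarity set of L(k,ℓ) (i.e., (x,u) ∈ L, (y,v) ∈ M = L*, and ⟨(x,u),(y,v)⟩ = 0) if and only if there exists λ > 0 such that v = -λu, e^⊤ y = ‖v‖, and (x - ‖u‖e, y) lies in the complementarity set of ℝ^k_+ (i.e., x - ‖u‖e ≥ 0, y ≥ 0, ⟨x - ‖u‖e, y⟩ = 0). -/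
open RealInnerProductSpace

theorem stmt3 (k l : ℕ) (hk : 0 < k) (hl : 0 < l)
    (x y : EuclideanSpace ℝ (Fin k)) (u v : EuclideanSpace ℝ (Fin l))
    (hu : u ≠ 0) (hv : v ≠ 0) :
    ((∀ i, ‖u‖ ≤ x i) ∧ (‖v‖ ≤ ∑ i, y i ∧ ∀ i, 0 ≤ y i) ∧
        ⟪x, y⟫ + ⟪u, v⟫ = 0) ↔
      (∃ lam : ℝ, 0 < lam ∧ v = -(lam • u) ∧ (∑ i, y i) = ‖v‖ ∧
        (∀ i, 0 ≤ x i - ‖u‖) ∧ (∀ i, 0 ≤ y i) ∧ (∑ i, (x i - ‖u‖) * y i) = 0) := by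
  have hun : (0:ℝ) < ‖u‖ := norm_pos_iff.mpr hu
  have hvn : (0:ℝ) < ‖v‖ := norm_pos_iff.mpr hv
  have hxy : ⟪x, y⟫ = ∑ i, x i * y i := by
    simp [PiLp.inner_apply, RCLike.inner_apply, mul_comm]
  constructor
  · rintro ⟨hx, ⟨hvy, hy⟩, hsum⟩
    have h1 : ‖u‖ * (∑ i, y i) ≤ ∑ i, x i * y i := by
      rw [Finset.mul_sum]
      exact Finset.sum_le_sum fun i _ => mul_le_mul_of_nonneg_right (hx i) (hy i)
    have h2 : -(‖u‖ * ‖v‖) ≤ ⟪u, v⟫ := neg_le_of_abs_le (abs_real_inner_le_norm u v)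
    have hA : ⟪x, y⟫ = -⟪u, v⟫ := by linarith
    have hle : ⟪x, y⟫ ≤ ‖u‖ * ‖v‖ := by linarith
    have hS : (∑ i, y i) = ‖v‖ := by
      have : ‖u‖ * (∑ i, y i) ≤ ‖u‖ * ‖v‖ := by rw [← hxy] at h1; linarith
      have := le_of_mul_le_mul_left this hun
      linarith
    have hAeq : ⟪x, y⟫ = ‖u‖ * ‖v‖ := by
      rw [hxy]; rw [hS] at h1; linarith [hxy ▸ hle]
    have hB : ⟪u, -v⟫ = ‖u‖ * ‖-v‖ := by
      rw [inner_neg_right, norm_neg]; linarith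
    have hray := (inner_eq_norm_mul_iff_real).mp hB
    -- ‖-v‖ • u = ‖u‖ • (-v)
    rw [norm_neg] at hray
    refine ⟨‖v‖ / ‖u‖, div_pos hvn hun, ?_, hS, fun i => by linarith [hx i], hy, ?_⟩
    · have : v = -((‖v‖ / ‖u‖) • u) := by
        have h3 : (‖u‖ : ℝ)⁻¹ • (‖v‖ • u) = (‖u‖ : ℝ)⁻¹ • (‖u‖ • (-v)) := by rw [hray]
        rw [smul_smul, smul_smul, inv_mul_cancel₀ hun.ne', one_smul] at h3
        rw [div_eq_inv_mul, ← smul_smul, smul_smul, h3, neg_neg]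
      exact this
    · have : (∑ i, (x i - ‖u‖) * y i) = (∑ i, x i * y i) - ‖u‖ * (∑ i, y i) := by
        rw [Finset.mul_sum, ← Finset.sum_sub_distrib]
        congr 1; ext i; ring
      rw [this, ← hxy, hAeq, hS]; ring
  · rintro ⟨lam, hlam, hveq, hsy, hx', hy, hcomp⟩
    have hnv : ‖v‖ = lam * ‖u‖ := by
      rw [hveq, norm_neg, norm_smul, Real.norm_eq_abs, abs_of_pos hlam]
    refine ⟨fun i => by linarith [hx' i], ⟨le_of_eq hsy.symm, hy⟩, ?_⟩
    have huv : ⟪u, v⟫ = -(lam * (‖u‖ * ‖u‖)) := by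
      rw [hveq, inner_neg_right, real_inner_smul_right, real_inner_self_eq_norm_mul_norm]
    have hxy2 : (∑ i, x i * y i) = ‖u‖ * (∑ i, y i) := by
      have : (∑ i, (x i - ‖u‖) * y i) = (∑ i, x i * y i) - ‖u‖ * (∑ i, y i) := by
        rw [Finset.mul_sum, ← Finset.sum_sub_distrib]
        congr 1; ext i; ring
      rw [this] at hcomp; linarith
    rw [hxy, hxy2, hsy, hnv, huv]; ring
end

section
/- Let n ≥ 2, V = [v¹ ... vⁿ] be an orthogonal matrix, Λ = diag(λ₁,...,λₙ) with λ₁ < λ₂ ≤ ... ≤ λₙ, and A = VΛV^⊤. If v¹ ∈ ℝ^n_+, then for any c with λ₁ < c ≤ λ₂, the set {x ∈ ℝ^n_{++} : Σᵢ (λᵢ - c)⟨vⁱ, x⟩² ≤ 0} is convex. -/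
open RealInnerProductSpace

/-!
Since `λᵢ ≥ λ₂ ≥ c > λ₁` for `i ≥ 2`, the quadratic inequality says `‖F x‖ ≤ √(c - λ₁) ⟪v¹, x⟫`, where
`F x = (√(λᵢ - c) ⟪vⁱ, x⟫)ᵢ` is linear, provided `⟪v¹, x⟫ ≥ 0`; and that holds on the positive orthant
because `v¹ ≥ 0`. The set is therefore the positive orthant intersected with a second-order cone,
and such a cone is convex by the triangle inequality for the norm.
-/

theorem convex_setOf_norm_le {E F : Type*} [AddCommGroup E] [Module ℝ E]
    [SeminormedAddCommGroup F] [NormedSpace ℝ F] (f : E →ₗ[ℝ] F) (g : E →ₗ[ℝ] ℝ) :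
    Convex ℝ {x | ‖f x‖ ≤ g x} := by
  simpa [sub_nonpos] using
    (((convexOn_norm convex_univ).comp_linearMap f).sub (g.concaveOn convex_univ)).convex_le 0

theorem sum_mul_sq_eq_sum_sqrt_mul_sq_sub {ι : Type*} [Fintype ι] (w a : ι → ℝ) (i₀ : ι)
    (hw₀ : w i₀ ≤ 0) (hw : ∀ i ≠ i₀, 0 ≤ w i) :
    ∑ i, w i * a i ^ 2 = ∑ i, (√(w i) * a i) ^ 2 - (√(-w i₀) * a i₀) ^ 2 := by
  classical
  -- `√` of a nonpositive number is `0`, so the `i₀` term of the first sum vanishes.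
  have hsplit : ∀ i, w i = √(w i) ^ 2 - if i = i₀ then √(-w i₀) ^ 2 else 0 := by
    intro i
    rw [Real.sq_sqrt']
    split_ifs with h
    · subst h; rw [Real.sq_sqrt (neg_nonneg.2 hw₀), max_eq_right hw₀]; ring
    · rw [max_eq_left (hw i h), sub_zero]
  simp_rw [mul_pow]
  conv_lhs => rw [Finset.sum_congr rfl fun i _ => by rw [hsplit i]]
  simp [sub_mul, Finset.sum_sub_distrib, ite_mul]

theorem convex_setOf_nonneg_and_sum_mul_sq_nonpos {ι E : Type*} [Fintype ι] [AddCommGroup E]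
    [Module ℝ E] (φ : ι → E →ₗ[ℝ] ℝ) (w : ι → ℝ) (i₀ : ι) (hw₀ : w i₀ ≤ 0)
    (hw : ∀ i ≠ i₀, 0 ≤ w i) :
    Convex ℝ {x | 0 ≤ φ i₀ x ∧ ∑ i, w i * φ i x ^ 2 ≤ 0} := by
  let F : E →ₗ[ℝ] EuclideanSpace ℝ ι :=
    (WithLp.linearEquiv 2 ℝ (ι → ℝ)).symm.toLinearMap ∘ₗ LinearMap.pi fun i => √(w i) • φ i
  let g : E →ₗ[ℝ] ℝ := √(-w i₀) • φ i₀
  have hF : ∀ x, ‖F x‖ ^ 2 = ∑ i, (√(w i) * φ i x) ^ 2 := fun x => by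
    simp [F, EuclideanSpace.norm_sq_eq, mul_pow]
  have hcone : {x | 0 ≤ φ i₀ x ∧ ∑ i, w i * φ i x ^ 2 ≤ 0} =
      {x | 0 ≤ φ i₀ x} ∩ {x | ‖F x‖ ≤ g x} := by
    ext x
    simp only [Set.mem_ofPred_eq, Set.mem_inter_iff, and_congr_right_iff]
    intro hx
    rw [sum_mul_sq_eq_sum_sqrt_mul_sq_sub w _ i₀ hw₀ hw, sub_nonpos, ← hF,
      sq_le_sq₀ (norm_nonneg _) (by positivity)]
    rfl
  rw [hcone]
  exact (convex_halfSpace_ge (φ i₀).isLinear 0).inter (convex_setOf_norm_le F g)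

theorem convex_setOf_forall_pos (ι : Type*) :
    Convex ℝ {x : EuclideanSpace ℝ ι | ∀ i, 0 < x i} := by
  intro x hx y hy a b ha hb hab i
  simpa using convex_Ioi (0 : ℝ) (hx i) (hy i) ha hb hab

theorem inner_nonneg_of_nonneg {ι : Type*} [Fintype ι] {u x : EuclideanSpace ℝ ι}
    (hu : ∀ i, 0 ≤ u i) (hx : ∀ i, 0 ≤ x i) : 0 ≤ ⟪u, x⟫ := by
  rw [PiLp.inner_apply]
  exact Finset.sum_nonneg fun i _ => mul_nonneg (hx i) (hu i)

theorem stmt15 (n : ℕ) (hn : 2 ≤ n)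
    (v : Fin n → EuclideanSpace ℝ (Fin n)) (lam : Fin n → ℝ)
    (hmono : Monotone lam)
    (hv1 : ∀ i, 0 ≤ v ⟨0, by omega⟩ i)
    (c : ℝ) (hc1 : lam ⟨0, by omega⟩ < c) (hc2 : c ≤ lam ⟨1, by omega⟩) :
    Convex ℝ {x : EuclideanSpace ℝ (Fin n) |
      (∀ i, 0 < x i) ∧ (∑ i, (lam i - c) * ⟪v i, x⟫ ^ 2) ≤ 0} := by
  have hw : ∀ i ≠ ⟨0, by omega⟩, 0 ≤ lam i - c := fun i hi =>
    sub_nonneg.2 (hc2.trans (hmono (Fin.le_iff_val_le_val.2 (Nat.one_le_iff_ne_zero.2 fun h => hi (Fin.ext h)))))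
  have hcone := convex_setOf_nonneg_and_sum_mul_sq_nonpos (fun i => (innerSL ℝ (v i)).toLinearMap)
    (fun i => lam i - c) ⟨0, by omega⟩ (sub_nonpos.2 hc1.le) hw
  convert (convex_setOf_forall_pos (Fin n)).inter hcone using 1
  ext x
  simp only [Set.mem_ofPred_eq, Set.mem_inter_iff, ContinuousLinearMap.coe_coe, innerSL_apply_apply]
  exact ⟨fun ⟨hx, hq⟩ => ⟨hx, inner_nonneg_of_nonneg hv1 fun i => (hx i).le, hq⟩,
    fun ⟨hx, _, hq⟩ => ⟨hx, hq⟩⟩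
end

section
/- Let n ≥ 3 and let A be a symmetric n×n matrix having exactly two distinct eigenvalues λ < μ, where λ has multiplicity one with unit eigenvector v¹. Then q_A(x) = ⟨Ax,x⟩ is spherically quasi-convex on S^{n-1} ∩ ℝ^n_{++} if and only if v¹ or -v¹ has all components nonnegative. -/
open RealInnerProductSpace

noncomputable def geo {n : ℕ} (x y : EuclideanSpace ℝ (Fin n)) (t : ℝ) :
    EuclideanSpace ℝ (Fin n) :=
  (Real.cos (t * Real.arccos ⟪x, y⟫) -
      ⟪x, y⟫ * Real.sin (t * Real.arccos ⟪x, y⟫) / Real.sqrt (1 - ⟪x, y⟫ ^ 2)) • x +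
    (Real.sin (t * Real.arccos ⟪x, y⟫) / Real.sqrt (1 - ⟪x, y⟫ ^ 2)) • y

def IsMinimalGeodesic {n : ℕ} (γ : ℝ → EuclideanSpace ℝ (Fin n)) : Prop :=
  (∃ x y : EuclideanSpace ℝ (Fin n), ‖x‖ = 1 ∧ ‖y‖ = 1 ∧ y ≠ x ∧ y ≠ -x ∧
      ∀ t, γ t = geo x y t) ∨
  (∃ x v : EuclideanSpace ℝ (Fin n), ‖x‖ = 1 ∧ ‖v‖ = 1 ∧ ⟪x, v⟫ = 0 ∧
      ∀ t, γ t = Real.cos (Real.pi * t) • x + Real.sin (Real.pi * t) • v)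

def SphericallyConvex {n : ℕ} (S : Set (EuclideanSpace ℝ (Fin n))) : Prop :=
  ∀ γ : ℝ → EuclideanSpace ℝ (Fin n), IsMinimalGeodesic γ → γ 0 ∈ S → γ 1 ∈ S →
    ∀ t ∈ Set.Icc (0 : ℝ) 1, γ t ∈ S

def SphQuasiconvexOn {n : ℕ} (S : Set (EuclideanSpace ℝ (Fin n)))
    (f : EuclideanSpace ℝ (Fin n) → ℝ) : Prop :=
  ∀ γ : ℝ → EuclideanSpace ℝ (Fin n), IsMinimalGeodesic γ →
    (∀ t ∈ Set.Icc (0 : ℝ) 1, γ t ∈ S) →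
    ∀ t ∈ Set.Icc (0 : ℝ) 1, f (γ t) ≤ max (f (γ 0)) (f (γ 1))

/-!
On the unit sphere `⟪A z, z⟫ = μ - (μ - λ) ⟪v₁, z⟫²`, so `q_A` is quasi-convex exactly when
`-⟪v₁, ·⟫²` is. Every point of a minimal geodesic arc from `x` to `y` is `a • x + b • y` with
`a, b ≥ 0` and `a + b ≥ 1`. If `v₁ ≥ 0`, then `⟪v₁, ·⟫` is positive on the open orthant, hence along
the arc it stays above its smaller endpoint value. If `v₁` has entries of both signs, there are
positive unit vectors on both sides of the hyperplane `v₁⊥`; the arc joining them stays in the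
orthant and crosses `v₁⊥`, where `q_A` takes its maximal value `μ`.
-/

namespace Real

lemma sin_add_sq (a b : ℝ) :
    sin (a + b) ^ 2 = sin a ^ 2 + sin b ^ 2 + 2 * sin a * sin b * cos (a + b) := by
  rw [sin_add, cos_add]
  nlinarith [sin_sq_add_cos_sq a, sin_sq_add_cos_sq b]

lemma sin_add_le_sin_add_sin {a b : ℝ} (ha : 0 ≤ sin a) (hb : 0 ≤ sin b) :
    sin (a + b) ≤ sin a + sin b := by
  rw [sin_add]
  nlinarith [cos_le_one a, cos_le_one b]

lemma sin_arccos_pos {d : ℝ} (hd : d ∈ Set.Ioo (-1) 1) : 0 < sin (arccos d) :=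
  sin_pos_of_pos_of_lt_pi (arccos_pos.2 hd.2) (arccos_lt_pi.2 hd.1)

end Real

open Real

section Geodesic

variable {n : ℕ} {x y : EuclideanSpace ℝ (Fin n)}

lemma inner_mem_Ioo_of_ne (hx : ‖x‖ = 1) (hy : ‖y‖ = 1) (hne : y ≠ x) (hne' : y ≠ -x) :
    ⟪x, y⟫ ∈ Set.Ioo (-1) 1 := by
  have hy' : ‖-y‖ = 1 := by rwa [norm_neg]
  have hneg := (inner_lt_one_iff_real_of_norm_eq_one hx hy').2 fun h =>
    hne' (neg_eq_iff_eq_neg.1 h.symm)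
  rw [inner_neg_right] at hneg
  exact ⟨by linarith, (inner_lt_one_iff_real_of_norm_eq_one hx hy).2 (Ne.symm hne)⟩

lemma geo_eq (h : ⟪x, y⟫ ∈ Set.Ioo (-1) 1) (t : ℝ) :
    geo x y t = (sin ((1 - t) * arccos ⟪x, y⟫) / sin (arccos ⟪x, y⟫)) • x
      + (sin (t * arccos ⟪x, y⟫) / sin (arccos ⟪x, y⟫)) • y := by
  have hsin := (sin_arccos_pos h).ne'
  have hcos : cos (arccos ⟪x, y⟫) = ⟪x, y⟫ := cos_arccos h.1.le h.2.le
  rw [geo, ← sin_arccos, sub_mul, one_mul, sin_sub, hcos]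
  congr 2
  field_simp

lemma geo_zero (h : ⟪x, y⟫ ∈ Set.Ioo (-1) 1) : geo x y 0 = x := by
  simp [geo_eq h, (sin_arccos_pos h).ne']

lemma geo_one (h : ⟪x, y⟫ ∈ Set.Ioo (-1) 1) : geo x y 1 = y := by
  simp [geo_eq h, (sin_arccos_pos h).ne']

lemma continuous_geo : Continuous (geo x y) := by
  unfold geo
  fun_prop

lemma norm_geo (hx : ‖x‖ = 1) (hy : ‖y‖ = 1) (h : ⟪x, y⟫ ∈ Set.Ioo (-1) 1) (t : ℝ) :
    ‖geo x y t‖ = 1 := by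
  have hsin := (sin_arccos_pos h).ne'
  have hcos : cos (arccos ⟪x, y⟫) = ⟪x, y⟫ := cos_arccos h.1.le h.2.le
  have key := sin_add_sq ((1 - t) * arccos ⟪x, y⟫) (t * arccos ⟪x, y⟫)
  rw [← add_mul, sub_add_cancel, one_mul, hcos] at key
  rw [← pow_eq_one_iff_of_nonneg (norm_nonneg _) two_ne_zero, geo_eq h, norm_add_sq_real,
    norm_smul, norm_smul, real_inner_smul_left, real_inner_smul_right, hx, hy]
  simp only [Real.norm_eq_abs, sq_abs, mul_one]
  field_simp
  linear_combination -key

/-- `a + b ≥ 1` is the subadditivity of `sin` on `[0, π]`. -/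
lemma exists_geo_eq_smul_add_smul (h : ⟪x, y⟫ ∈ Set.Ioo (-1) 1) {t : ℝ}
    (ht : t ∈ Set.Icc (0 : ℝ) 1) :
    ∃ a b : ℝ, 0 ≤ a ∧ 0 ≤ b ∧ 1 ≤ a + b ∧ geo x y t = a • x + b • y := by
  set θ := arccos ⟪x, y⟫
  have hθ : θ ≤ π := arccos_le_pi _
  have hsθ : 0 < sin θ := sin_arccos_pos h
  have ha : 0 ≤ sin ((1 - t) * θ) :=
    sin_nonneg_of_nonneg_of_le_pi (mul_nonneg (by linarith [ht.2]) (arccos_nonneg _))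
      (by nlinarith [ht.1, arccos_nonneg ⟪x, y⟫])
  have hb : 0 ≤ sin (t * θ) :=
    sin_nonneg_of_nonneg_of_le_pi (mul_nonneg ht.1 (arccos_nonneg _))
      (by nlinarith [ht.2, arccos_nonneg ⟪x, y⟫])
  have hsub := sin_add_le_sin_add_sin ha hb
  rw [← add_mul, sub_add_cancel, one_mul] at hsub
  refine ⟨_, _, div_nonneg ha hsθ.le, div_nonneg hb hsθ.le, ?_, geo_eq h t⟩
  rwa [← add_div, le_div_iff₀ hsθ, one_mul]

end Geodesic

section Quasiconvex

variable {n : ℕ} {S : Set (EuclideanSpace ℝ (Fin n))}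

lemma sphQuasiconvexOn_congr {f g : EuclideanSpace ℝ (Fin n) → ℝ} (h : ∀ z ∈ S, f z = g z) :
    SphQuasiconvexOn S f ↔ SphQuasiconvexOn S g := by
  suffices ∀ f g : EuclideanSpace ℝ (Fin n) → ℝ, (∀ z ∈ S, f z = g z) →
      SphQuasiconvexOn S f → SphQuasiconvexOn S g from
    ⟨this f g h, this g f fun z hz => (h z hz).symm⟩
  intro f g h hf γ hγ hS t ht
  rw [← h _ (hS t ht), ← h _ (hS 0 ⟨le_rfl, zero_le_one⟩), ← h _ (hS 1 ⟨zero_le_one, le_rfl⟩)]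
  exact hf γ hγ hS t ht

lemma sphQuasiconvexOn_comp_iff {φ : ℝ → ℝ} (hφ : StrictMono φ)
    {f : EuclideanSpace ℝ (Fin n) → ℝ} :
    SphQuasiconvexOn S (φ ∘ f) ↔ SphQuasiconvexOn S f := by
  simp only [SphQuasiconvexOn, Function.comp_apply, ← hφ.monotone.map_max, hφ.le_iff_le]

end Quasiconvex

lemma inner_map_self_eq_sub_sq_inner {E : Type*} [NormedAddCommGroup E] [InnerProductSpace ℝ E]
    (A : E →ₗ[ℝ] E) {lam mu : ℝ} {v : E} (hv : ‖v‖ = 1) (hAv : A v = lam • v)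
    (hA : ∀ x, ⟪v, x⟫ = 0 → A x = mu • x) (z : E) :
    ⟪A z, z⟫ = mu * ‖z‖ ^ 2 - (mu - lam) * ⟪v, z⟫ ^ 2 := by
  have hvv : ⟪v, v⟫ = 1 := by rw [real_inner_self_eq_norm_sq, hv, one_pow]
  have horth : ⟪v, z - ⟪v, z⟫ • v⟫ = 0 := by
    rw [inner_sub_right, real_inner_smul_right, hvv, mul_one, sub_self]
  have hAz : A z = (⟪v, z⟫ * lam) • v + mu • (z - ⟪v, z⟫ • v) := by
    conv_lhs => rw [← add_sub_cancel (⟪v, z⟫ • v) z]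
    rw [map_add, map_smul, hAv, hA _ horth, smul_smul]
  rw [hAz, inner_add_left, real_inner_smul_left, real_inner_smul_left, inner_sub_left,
    real_inner_smul_left, real_inner_self_eq_norm_sq]
  ring

section PositiveOrthant

variable {ι : Type*} [Fintype ι]

lemma inner_pos_of_nonneg_of_pos {v z : EuclideanSpace ℝ ι} (hv0 : v ≠ 0) (hv : ∀ i, 0 ≤ v i)
    (hz : ∀ i, 0 < z i) : 0 < ⟪v, z⟫ := by
  obtain ⟨k, hk⟩ : ∃ k, v k ≠ 0 := by
    by_contra! h
    exact hv0 (by ext k; simp [h k])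
  simp only [PiLp.inner_apply, RCLike.inner_apply, conj_trivial]
  exact Finset.sum_pos' (fun i _ => mul_nonneg (hz i).le (hv i))
    ⟨k, Finset.mem_univ k, mul_pos (hz k) ((hv k).lt_of_ne' hk)⟩

/-- Perturb the basis vector `e_j` by `ε (1, …, 1)`, with `ε |∑ᵢ vᵢ| < v j`. -/
lemma exists_pos_inner_pos {v : EuclideanSpace ℝ ι} {j : ι} (hj : 0 < v j) :
    ∃ z : EuclideanSpace ℝ ι, ‖z‖ = 1 ∧ (∀ i, 0 < z i) ∧ 0 < ⟪v, z⟫ := by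
  classical
  set s := ∑ i, v i
  set ε := v j / (|s| + 1)
  have hε : 0 < ε := by positivity
  have hεs : ε * |s| < v j := by
    calc ε * |s| < ε * (|s| + 1) := by nlinarith
      _ = v j := div_mul_cancel₀ _ (by positivity)
  set u : EuclideanSpace ℝ ι := EuclideanSpace.single j 1 + ε • WithLp.toLp 2 (fun _ => 1)
  have hu : ∀ i, 0 < u i := by
    intro i
    simp only [u, PiLp.add_apply, PiLp.smul_apply, PiLp.single_apply, smul_eq_mul,
      mul_one]
    split_ifs <;> linarith
  have hvu : 0 < ⟪v, u⟫ := by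
    have : ⟪v, u⟫ = v j + ε * s := by
      simp [u, inner_add_right, PiLp.inner_apply, s, Finset.sum_mul, mul_comm]
    rw [this]
    nlinarith [neg_abs_le s]
  have hu0 : u ≠ 0 := fun h => by simpa [h] using hu j
  have hnorm : 0 < ‖u‖⁻¹ := inv_pos.2 (norm_pos_iff.2 hu0)
  refine ⟨‖u‖⁻¹ • u, norm_smul_inv_norm hu0, fun i => ?_, ?_⟩
  · simpa only [PiLp.smul_apply, smul_eq_mul] using mul_pos hnorm (hu i)
  · rw [real_inner_smul_right]
    exact mul_pos hnorm hvu

end PositiveOrthant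

abbrev posSphere (n : ℕ) : Set (EuclideanSpace ℝ (Fin n)) :=
  Metric.sphere 0 1 ∩ {x | ∀ i, 0 < x i}

section PosSphere

variable {n : ℕ} {x y v : EuclideanSpace ℝ (Fin n)}

lemma neg_notMem_posSphere (hx : x ∈ posSphere n) : -x ∉ posSphere n := by
  obtain ⟨i, -⟩ : ∃ i, x i ≠ 0 := by
    by_contra! h
    have : x = 0 := by ext i; simp [h i]
    simpa [this] using hx.1
  intro hnx
  have := hnx.2 i
  simp only [PiLp.neg_apply, Left.neg_pos_iff] at this
  exact (hx.2 i).not_gt this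

lemma geo_mem_posSphere (hx : x ∈ posSphere n) (hy : y ∈ posSphere n)
    (h : ⟪x, y⟫ ∈ Set.Ioo (-1) 1) {t : ℝ} (ht : t ∈ Set.Icc (0 : ℝ) 1) :
    geo x y t ∈ posSphere n := by
  refine ⟨mem_sphere_zero_iff_norm.2 (norm_geo (mem_sphere_zero_iff_norm.1 hx.1)
    (mem_sphere_zero_iff_norm.1 hy.1) h t), fun i => ?_⟩
  obtain ⟨a, b, ha, hb, hab, hgeo⟩ := exists_geo_eq_smul_add_smul h ht
  have hxi := hx.2 i
  have hyi := hy.2 i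
  simp only [hgeo, PiLp.add_apply, PiLp.smul_apply, smul_eq_mul]
  nlinarith [mul_le_mul_of_nonneg_left (min_le_left (x i) (y i)) ha,
    mul_le_mul_of_nonneg_left (min_le_right (x i) (y i)) hb, lt_min hxi hyi]

lemma min_inner_le_inner_geo (h : ⟪x, y⟫ ∈ Set.Ioo (-1) 1) (hvx : 0 ≤ ⟪v, x⟫) (hvy : 0 ≤ ⟪v, y⟫)
    {t : ℝ} (ht : t ∈ Set.Icc (0 : ℝ) 1) : min ⟪v, x⟫ ⟪v, y⟫ ≤ ⟪v, geo x y t⟫ := by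
  obtain ⟨a, b, ha, hb, hab, hgeo⟩ := exists_geo_eq_smul_add_smul h ht
  rw [hgeo, inner_add_right, real_inner_smul_right, real_inner_smul_right]
  have hmx := min_le_left ⟪v, x⟫ ⟪v, y⟫
  have hmy := min_le_right ⟪v, x⟫ ⟪v, y⟫
  have hm := le_min hvx hvy
  nlinarith

lemma sphQuasiconvexOn_neg_sq_inner_of_nonneg (hv0 : v ≠ 0) (hv : ∀ i, 0 ≤ v i) :
    SphQuasiconvexOn (posSphere n) (fun z => -⟪v, z⟫ ^ 2) := by
  intro γ hγ hS t ht
  have hS0 := hS 0 ⟨le_rfl, zero_le_one⟩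
  have hS1 := hS 1 ⟨zero_le_one, le_rfl⟩
  rcases hγ with ⟨x, y, hx, hy, hne, hne', hγ⟩ | ⟨x, w, -, -, -, hγ⟩
  · obtain rfl : γ = geo x y := funext hγ
    have h := inner_mem_Ioo_of_ne hx hy hne hne'
    rw [geo_zero h] at hS0 ⊢
    rw [geo_one h] at hS1 ⊢
    have hvx := inner_pos_of_nonneg_of_pos hv0 hv hS0.2
    have hvy := inner_pos_of_nonneg_of_pos hv0 hv hS1.2
    have hsq : min ⟪v, x⟫ ⟪v, y⟫ ^ 2 ≤ ⟪v, geo x y t⟫ ^ 2 :=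
      pow_le_pow_left₀ (le_min hvx.le hvy.le) (min_inner_le_inner_geo h hvx.le hvy.le ht) 2
    rcases min_choice ⟪v, x⟫ ⟪v, y⟫ with hm | hm <;> rw [hm] at hsq
    · exact le_max_of_le_left (neg_le_neg hsq)
    · exact le_max_of_le_right (neg_le_neg hsq)
  · rw [hγ] at hS0 hS1
    simp only [mul_zero, cos_zero, sin_zero, one_smul, zero_smul, add_zero, mul_one, cos_pi,
      sin_pi, neg_one_smul] at hS0 hS1
    exact absurd hS1 (neg_notMem_posSphere hS0)

lemma not_sphQuasiconvexOn_neg_sq_inner {i j : Fin n} (hi : v i < 0) (hj : 0 < v j) :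
    ¬ SphQuasiconvexOn (posSphere n) (fun z => -⟪v, z⟫ ^ 2) := by
  intro hQ
  obtain ⟨x, hx, hxpos, hvx⟩ := exists_pos_inner_pos hj
  obtain ⟨y, hy, hypos, hvy⟩ := exists_pos_inner_pos (v := -v) (j := i) (by simpa using hi)
  rw [inner_neg_left, neg_pos] at hvy
  have hxS : x ∈ posSphere n := ⟨mem_sphere_zero_iff_norm.2 hx, hxpos⟩
  have hyS : y ∈ posSphere n := ⟨mem_sphere_zero_iff_norm.2 hy, hypos⟩
  have hne : y ≠ x := by rintro rfl; linarith
  have hne' : y ≠ -x := by rintro rfl; exact neg_notMem_posSphere hxS hyS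
  have h := inner_mem_Ioo_of_ne hx hy hne hne'
  obtain ⟨t, ht, hvt⟩ : ∃ t ∈ Set.Icc (0 : ℝ) 1, ⟪v, geo x y t⟫ = 0 :=
    intermediate_value_Icc' zero_le_one (continuous_const.inner continuous_geo).continuousOn
      (by simpa [geo_zero h, geo_one h] using ⟨hvy.le, hvx.le⟩)
  have hle := hQ (geo x y) (Or.inl ⟨x, y, hx, hy, hne, hne', fun _ => rfl⟩)
    (fun s hs => geo_mem_posSphere hxS hyS h hs) t ht
  simp only [hvt, geo_zero h, geo_one h] at hle
  rcases le_max_iff.1 hle with hle | hle <;> nlinarith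

theorem sphQuasiconvexOn_neg_sq_inner_iff (hv : v ≠ 0) :
    SphQuasiconvexOn (posSphere n) (fun z => -⟪v, z⟫ ^ 2) ↔
      (∀ i, 0 ≤ v i) ∨ ∀ i, v i ≤ 0 := by
  refine ⟨fun hQ => ?_, ?_⟩
  · by_contra! h
    obtain ⟨⟨i, hi⟩, j, hj⟩ := h
    exact not_sphQuasiconvexOn_neg_sq_inner hi hj hQ
  · rintro (h | h)
    · exact sphQuasiconvexOn_neg_sq_inner_of_nonneg hv h
    · simpa only [inner_neg_left, neg_sq] using
        sphQuasiconvexOn_neg_sq_inner_of_nonneg (neg_ne_zero.2 hv) (by simpa using h)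

end PosSphere

theorem stmt16_general (n : ℕ)
    (A : EuclideanSpace ℝ (Fin n) →ₗ[ℝ] EuclideanSpace ℝ (Fin n))
    (lam mu : ℝ) (hlt : lam < mu)
    (v1 : EuclideanSpace ℝ (Fin n)) (hv1 : ‖v1‖ = 1) (heig : A v1 = lam • v1)
    (hrest : ∀ x, ⟪v1, x⟫ = 0 → A x = mu • x) :
    SphQuasiconvexOn
        (Metric.sphere (0 : EuclideanSpace ℝ (Fin n)) 1 ∩ {x | ∀ i, 0 < x i})
        (fun x => ⟪A x, x⟫) ↔
      ((∀ i, 0 ≤ v1 i) ∨ (∀ i, v1 i ≤ 0)) := by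
  have hq : ∀ z ∈ posSphere n,
      ⟪A z, z⟫ = ((fun s => mu + (mu - lam) * s) ∘ fun z => -⟪v1, z⟫ ^ 2) z := by
    intro z hz
    rw [inner_map_self_eq_sub_sq_inner A hv1 heig hrest, mem_sphere_zero_iff_norm.1 hz.1]
    simp only [Function.comp_apply]
    ring
  have hmono : StrictMono fun s => mu + (mu - lam) * s :=
    (strictMono_mul_left_of_pos (sub_pos.2 hlt)).const_add mu
  rw [sphQuasiconvexOn_congr hq, sphQuasiconvexOn_comp_iff hmono]
  exact sphQuasiconvexOn_neg_sq_inner_iff (norm_ne_zero_iff.1 (hv1 ▸ one_ne_zero))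

theorem stmt16 (n : ℕ) (hn : 3 ≤ n)
    (A : EuclideanSpace ℝ (Fin n) →ₗ[ℝ] EuclideanSpace ℝ (Fin n))
    (hsymm : ∀ x y, ⟪A x, y⟫ = ⟪x, A y⟫)
    (lam mu : ℝ) (hlt : lam < mu)
    (v1 : EuclideanSpace ℝ (Fin n)) (hv1 : ‖v1‖ = 1) (heig : A v1 = lam • v1)
    (hrest : ∀ x, ⟪v1, x⟫ = 0 → A x = mu • x) :
    SphQuasiconvexOn
        (Metric.sphere (0 : EuclideanSpace ℝ (Fin n)) 1 ∩ {x | ∀ i, 0 < x i})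
        (fun x => ⟪A x, x⟫) ↔
      ((∀ i, 0 ≤ v1 i) ∨ (∀ i, v1 i ≤ 0)) :=
  stmt16_general n A lam mu hlt v1 hv1 heig hrest
end

section
/- Let n ≥ 3 and let A be a symmetric n×n matrix with exactly two distinct eigenvalues, the smaller one λ having multiplicity one. If an eigenvector of A corresponding to λ belongs to the dual cone K* of a subdual proper cone K, then μ I_n - A is K-copositive, where μ is the larger eigenvalue; consequently q_A(x) = ⟨Ax,x⟩ is spherically quasi-convex on S^{n-1} ∩ int(K). -/
open RealInnerProductSpace


/-!
Write `q x = ⟪A x, x⟫`. Splitting `x` along the eigenvector `v₁` gives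
`μ ‖x‖² - q x = (μ - λ) ⟪v₁, x⟫²`, which is nonnegative everywhere, so in particular on `K`.
On the unit sphere `q` is therefore an antitone function of `g = ⟪v₁, ·⟫`, which is nonnegative
on `K` since `v₁ ∈ K*`. Along a great circle `g` has the form `a cos (c t) + b sin (c t)`, which solves
`g'' = -c² g` and so is concave wherever it is nonnegative; hence `g` stays above the smaller of its
endpoint values, and `q` below the larger.
-/

open Real Set

section TwoEigenvalues

variable {E : Type*} [NormedAddCommGroup E] [InnerProductSpace ℝ E]

theorem mul_norm_sq_sub_inner_apply_self {A : E →ₗ[ℝ] E} {v : E} {lam mu : ℝ} (hv : ‖v‖ = 1)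
    (hAv : A v = lam • v) (hA : ∀ x, ⟪v, x⟫ = 0 → A x = mu • x) (x : E) :
    mu * ‖x‖ ^ 2 - ⟪A x, x⟫ = (mu - lam) * ⟪v, x⟫ ^ 2 := by
  set c := ⟪v, x⟫
  have hvv : ⟪v, v⟫ = 1 := by rw [real_inner_self_eq_norm_sq, hv, one_pow]
  have horth : ⟪v, x - c • v⟫ = 0 := by
    rw [inner_sub_right, real_inner_smul_right, hvv, mul_one, sub_self]
  have hAx : A x = mu • (x - c • v) + (c * lam) • v := by
    rw [← hA _ horth, mul_smul, ← hAv, ← map_smul, ← map_add, sub_add_cancel]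
  rw [hAx]
  simp only [inner_add_left, inner_sub_left, real_inner_smul_left, real_inner_self_eq_norm_sq]
  ring

end TwoEigenvalues

theorem concaveOn_sinusoid_of_nonneg {a b c : ℝ} {D : Set ℝ} (hD : Convex ℝ D)
    (hnonneg : ∀ t ∈ D, 0 ≤ a * cos (c * t) + b * sin (c * t)) :
    ConcaveOn ℝ D fun t => a * cos (c * t) + b * sin (c * t) := by
  have hlin (t : ℝ) : HasDerivAt (fun t => c * t) c t := by
    simpa using (hasDerivAt_id t).const_mul c
  have hcos (t : ℝ) := (hasDerivAt_cos (c * t)).comp t (hlin t)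
  have hsin (t : ℝ) := (hasDerivAt_sin (c * t)).comp t (hlin t)
  refine concaveOn_of_hasDerivWithinAt2_nonpos hD (by fun_prop)
    (f' := fun t => -(a * c) * sin (c * t) + b * c * cos (c * t))
    (f'' := fun t => -c ^ 2 * (a * cos (c * t) + b * sin (c * t)))
    (fun t _ => (((hcos t).const_mul a).add ((hsin t).const_mul b)).hasDerivWithinAt.congr_deriv
      (by ring))
    (fun t _ => (((hsin t).const_mul (-(a * c))).add
      ((hcos t).const_mul (b * c))).hasDerivWithinAt.congr_deriv (by ring)) ?_
  intro t ht
  exact mul_nonpos_of_nonpos_of_nonneg (neg_nonpos.2 (sq_nonneg c))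
    (hnonneg t (interior_subset ht))

namespace IsMinimalGeodesic

variable {n : ℕ} {γ : ℝ → EuclideanSpace ℝ (Fin n)}

theorem exists_inner_eq_sinusoid (hγ : IsMinimalGeodesic γ) (w : EuclideanSpace ℝ (Fin n)) :
    ∃ a b c : ℝ, ∀ t, ⟪w, γ t⟫ = a * cos (c * t) + b * sin (c * t) := by
  rcases hγ with ⟨x, y, -, -, -, -, hγ⟩ | ⟨x, v, -, -, -, hγ⟩
  · refine ⟨⟪w, x⟫, (⟪w, y⟫ - ⟪x, y⟫ * ⟪w, x⟫) / √(1 - ⟪x, y⟫ ^ 2), arccos ⟪x, y⟫,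
      fun t => ?_⟩
    simp only [hγ, geo, inner_add_right, real_inner_smul_right, mul_comm t]
    ring
  · refine ⟨⟪w, x⟫, ⟪w, v⟫, π, fun t => ?_⟩
    simp only [hγ, inner_add_right, real_inner_smul_right]
    ring

theorem min_inner_le_inner (hγ : IsMinimalGeodesic γ) {w : EuclideanSpace ℝ (Fin n)}
    (hw : ∀ t ∈ Icc (0 : ℝ) 1, 0 ≤ ⟪w, γ t⟫) {t : ℝ} (ht : t ∈ Icc (0 : ℝ) 1) :
    min ⟪w, γ 0⟫ ⟪w, γ 1⟫ ≤ ⟪w, γ t⟫ := by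
  obtain ⟨a, b, c, hg⟩ := hγ.exists_inner_eq_sinusoid w
  simp only [hg] at hw ⊢
  exact (concaveOn_sinusoid_of_nonneg (convex_Icc 0 1) hw).ge_on_segment
    (left_mem_Icc.2 zero_le_one) (right_mem_Icc.2 zero_le_one)
    (by rwa [segment_eq_Icc zero_le_one])

end IsMinimalGeodesic

theorem SphQuasiconvexOn.of_eqOn_antitoneOn_comp_inner {n : ℕ}
    {S : Set (EuclideanSpace ℝ (Fin n))} {f : EuclideanSpace ℝ (Fin n) → ℝ}
    {w : EuclideanSpace ℝ (Fin n)} {φ : ℝ → ℝ} (hφ : AntitoneOn φ (Ici 0))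
    (hw : ∀ x ∈ S, 0 ≤ ⟪w, x⟫) (hf : ∀ x ∈ S, f x = φ ⟪w, x⟫) : SphQuasiconvexOn S f := by
  intro γ hγ hγS t ht
  have hg (s : ℝ) (hs : s ∈ Icc (0 : ℝ) 1) : 0 ≤ ⟪w, γ s⟫ := hw _ (hγS s hs)
  have h0 := left_mem_Icc.2 (zero_le_one' ℝ)
  have h1 := right_mem_Icc.2 (zero_le_one' ℝ)
  have hle : φ ⟪w, γ t⟫ ≤ φ (min ⟪w, γ 0⟫ ⟪w, γ 1⟫) :=
    hφ (le_min (hg 0 h0) (hg 1 h1)) (hg t ht) (hγ.min_inner_le_inner hg ht)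
  rw [hf _ (hγS t ht), hf _ (hγS 0 h0), hf _ (hγS 1 h1)]
  rcases min_choice ⟪w, γ 0⟫ ⟪w, γ 1⟫ with hmin | hmin <;> rw [hmin] at hle
  · exact hle.trans (le_max_left _ _)
  · exact hle.trans (le_max_right _ _)

theorem stmt17_general (n : ℕ) (K : Set (EuclideanSpace ℝ (Fin n)))
    (A : EuclideanSpace ℝ (Fin n) →ₗ[ℝ] EuclideanSpace ℝ (Fin n))
    (lam mu : ℝ) (hlt : lam < mu)
    (v1 : EuclideanSpace ℝ (Fin n)) (hv1 : ‖v1‖ = 1) (heig : A v1 = lam • v1)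
    (hrest : ∀ x, ⟪v1, x⟫ = 0 → A x = mu • x)
    (hdualmem : ∀ x ∈ K, 0 ≤ ⟪x, v1⟫) :
    (∀ x ∈ K, 0 ≤ mu * ‖x‖ ^ 2 - ⟪A x, x⟫) ∧
      SphQuasiconvexOn
        (Metric.sphere (0 : EuclideanSpace ℝ (Fin n)) 1 ∩ interior K)
        (fun x => ⟪A x, x⟫) := by
  have hform := mul_norm_sq_sub_inner_apply_self hv1 heig hrest
  refine ⟨fun x _ => hform x ▸ mul_nonneg (sub_nonneg.2 hlt.le) (sq_nonneg _), ?_⟩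
  refine SphQuasiconvexOn.of_eqOn_antitoneOn_comp_inner (w := v1)
    (φ := fun s => mu - (mu - lam) * s ^ 2) ?_ ?_ ?_
  · intro s hs r hr hsr
    have := mul_le_mul_of_nonneg_left (pow_le_pow_left₀ hs hsr 2) (sub_nonneg.2 hlt.le)
    dsimp only
    linarith
  · exact fun x hx => real_inner_comm x v1 ▸ hdualmem x (interior_subset hx.2)
  · intro x hx
    have := hform x
    rw [mem_sphere_zero_iff_norm.1 hx.1, one_pow, mul_one] at this
    linarith

theorem stmt17 (n : ℕ) (hn : 3 ≤ n) (K : Set (EuclideanSpace ℝ (Fin n)))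
    (hclosed : IsClosed K) (hconv : Convex ℝ K)
    (hcone : ∀ c : ℝ, 0 < c → ∀ x ∈ K, c • x ∈ K)
    (hpointed : K ∩ (-K) ⊆ {0}) (hint : (interior K).Nonempty)
    (hsubdual : ∀ x ∈ K, ∀ y ∈ K, 0 ≤ ⟪x, y⟫)
    (A : EuclideanSpace ℝ (Fin n) →ₗ[ℝ] EuclideanSpace ℝ (Fin n))
    (hsymm : ∀ x y, ⟪A x, y⟫ = ⟪x, A y⟫)
    (lam mu : ℝ) (hlt : lam < mu)
    (v1 : EuclideanSpace ℝ (Fin n)) (hv1 : ‖v1‖ = 1) (heig : A v1 = lam • v1)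
    (hrest : ∀ x, ⟪v1, x⟫ = 0 → A x = mu • x)
    (hdualmem : ∀ x ∈ K, 0 ≤ ⟪x, v1⟫) :
    (∀ x ∈ K, 0 ≤ mu * ‖x‖ ^ 2 - ⟪A x, x⟫) ∧
      SphQuasiconvexOn
        (Metric.sphere (0 : EuclideanSpace ℝ (Fin n)) 1 ∩ interior K)
        (fun x => ⟪A x, x⟫) :=
  stmt17_general n K A lam mu hlt v1 hv1 heig hrest hdualmem
end
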